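/- arXiv:math/9802057 — 2 statements merged into one kernel-verified Lean document; each statement's English description precedes it below -/
import Mathlib

section
/- Let U ⊆ ℂ² be open, let f : U → ℝ \ {0} and h : U → ℂ be smooth, let g = 2f²(dz₁ + h dz₂)(dz̄₁ + h̄ dz̄₂) + (2/f²) dz₂ dz̄₂, and for φ ∈ ℝ let J⁺_{e^{iφ}} = 2Re{ i e^{iφ} [ f²(dz₁ + h dz₂) ⊗ (∂_{z̄₂} − h̄ ∂_{z̄₁}) − (1/f²) dz₂ ⊗ ∂_{z̄₁} ] }. Then at every point of U, J⁺_{e^{iφ}} is a real endomorphism of the tangent space satisfying (J⁺_{e^{iφ}})² = −id and g(J⁺_{e^{iφ}}X, J⁺_{e^{iφ}}Y) = g(X,Y) for all tangent vectors X, Y. -/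
noncomputable section

/-- The metric `g = 2f²(dz₁ + h dz₂)(dz̄₁ + h̄ dz̄₂) + (2/f²) dz₂ dz̄₂` (with
`2αβ = α⊗β + β⊗α`) at a point where `f, h` take the values `f, h`, evaluated on real
tangent vectors `X, Y ∈ ℂ² ≅ ℝ⁴` (so `dz₁(X) = X.1`, `dz₂(X) = X.2`). -/
def gFH (f : ℝ) (h : ℂ) (X Y : ℂ × ℂ) : ℝ :=
  2 * f ^ 2 * ((X.1 + h * X.2) * starRingEnd ℂ (Y.1 + h * Y.2)).re +
    2 / f ^ 2 * (X.2 * starRingEnd ℂ Y.2).re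

/-- The almost complex structure
`J⁺_{e^{iφ}} = 2Re{ i e^{iφ} [ f²(dz₁ + h dz₂) ⊗ (∂_{z̄₂} − h̄ ∂_{z̄₁}) − (1/f²) dz₂ ⊗ ∂_{z̄₁} ] }`
as a real endomorphism of the tangent space `ℂ² ≅ ℝ⁴`: a real tangent vector `X`
corresponds to `X.1 ∂_{z₁} + conj X.1 ∂_{z̄₁} + X.2 ∂_{z₂} + conj X.2 ∂_{z̄₂}` in the
complexified tangent space, and `2Re{T} = T + T̄`; the components below are the
`∂_{z₁}`- and `∂_{z₂}`-coefficients of `(T + T̄)(X)`. -/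
def JFH (f : ℝ) (h : ℂ) (φ : ℝ) (X : ℂ × ℂ) : ℂ × ℂ :=
  (starRingEnd ℂ (Complex.I * Complex.exp ((φ : ℂ) * Complex.I) *
      (-(f ^ 2 : ℝ) * (X.1 + h * X.2) * starRingEnd ℂ h - X.2 / (f ^ 2 : ℝ))),
   starRingEnd ℂ (Complex.I * Complex.exp ((φ : ℂ) * Complex.I) *
      ((f ^ 2 : ℝ) * (X.1 + h * X.2))))

set_option maxHeartbeats 1000000 in
lemma re_conj_mul (a b : ℂ) :
    (starRingEnd ℂ a * b).re = (a * starRingEnd ℂ b).re := by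
  rw [← Complex.conj_re (starRingEnd ℂ a * b), map_mul, Complex.conj_conj]

set_option maxHeartbeats 1000000 in
/-- For smooth `f : U → ℝ \ {0}` and `h : U → ℂ` on an open `U ⊆ ℂ²`
and any `φ ∈ ℝ`, the tensor `J⁺_{e^{iφ}}` is, at every point of `U`, a real
endomorphism of the tangent space with `(J⁺_{e^{iφ}})² = −id` which is compatible
with the metric `g`. -/
theorem JFH_almost_hermitian (U : Set (ℂ × ℂ)) (hU : IsOpen U)
    (f : ℂ × ℂ → ℝ) (h : ℂ × ℂ → ℂ)
    (hf : ContDiffOn ℝ (⊤ : ℕ∞) f U) (hh : ContDiffOn ℝ (⊤ : ℕ∞) h U)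
    (hf0 : ∀ p ∈ U, f p ≠ 0) (φ : ℝ) :
    ∀ p ∈ U,
      (∀ X Y : ℂ × ℂ,
        JFH (f p) (h p) φ (X + Y) = JFH (f p) (h p) φ X + JFH (f p) (h p) φ Y) ∧
      (∀ (c : ℝ) (X : ℂ × ℂ), JFH (f p) (h p) φ (c • X) = c • JFH (f p) (h p) φ X) ∧
      (∀ X : ℂ × ℂ, JFH (f p) (h p) φ (JFH (f p) (h p) φ X) = -X) ∧
      (∀ X Y : ℂ × ℂ,
        gFH (f p) (h p) (JFH (f p) (h p) φ X) (JFH (f p) (h p) φ Y) =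
          gFH (f p) (h p) X Y) := by
  intro p hp
  have hF0 : f p ≠ 0 := hf0 p hp
  have hFc : ((f p : ℝ) : ℂ) ≠ 0 := by exact_mod_cast hF0
  have hFc2 : ((f p ^ 2 : ℝ) : ℂ) ≠ 0 := by
    push_cast; exact pow_ne_zero 2 hFc
  have key : starRingEnd ℂ (Complex.exp ((φ : ℂ) * Complex.I)) *
      Complex.exp ((φ : ℂ) * Complex.I) = 1 := by
    rw [← Complex.exp_conj, ← Complex.exp_add]
    simp [Complex.conj_I]
  refine ⟨?_, ?_, ?_, ?_⟩
  · intro X Y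
    simp only [JFH, Prod.ext_iff, Prod.fst_add, Prod.snd_add, map_mul, map_add,
      map_sub, map_neg, map_div₀, Complex.conj_conj, Complex.conj_I,
      Complex.conj_ofReal]
    constructor <;> ring
  · intro c X
    simp only [JFH, Prod.ext_iff, Prod.smul_fst, Prod.smul_snd, Complex.real_smul,
      map_mul, map_add, map_sub, map_neg, map_div₀, Complex.conj_conj,
      Complex.conj_I, Complex.conj_ofReal]
    constructor <;> ring
  · intro X
    simp only [JFH, Prod.ext_iff, Prod.fst_neg, Prod.snd_neg, map_mul, map_add,
      map_sub, map_neg, map_div₀, Complex.conj_conj, Complex.conj_I,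
      Complex.conj_ofReal]
    generalize hw : starRingEnd ℂ (Complex.exp ((φ : ℂ) * Complex.I)) = w at key ⊢
    generalize hE : Complex.exp ((φ : ℂ) * Complex.I) = E at key ⊢
    have hE0 : E ≠ 0 := right_ne_zero_of_mul_eq_one key
    rw [eq_inv_of_mul_eq_one_left key]
    constructor <;>
      (field_simp [hFc, hE0]; ring_nf; simp only [Complex.I_sq]; ring_nf)
  · intro X Y
    have main : ((2 * (f p) ^ 2 : ℝ) : ℂ) *
          (((JFH (f p) (h p) φ X).1 + h p * (JFH (f p) (h p) φ X).2) *
            starRingEnd ℂ ((JFH (f p) (h p) φ Y).1 + h p * (JFH (f p) (h p) φ Y).2)) +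
          ((2 / (f p) ^ 2 : ℝ) : ℂ) *
          ((JFH (f p) (h p) φ X).2 * starRingEnd ℂ (JFH (f p) (h p) φ Y).2) =
        ((2 * (f p) ^ 2 : ℝ) : ℂ) *
          (starRingEnd ℂ (X.1 + h p * X.2) * (Y.1 + h p * Y.2)) +
          ((2 / (f p) ^ 2 : ℝ) : ℂ) * (starRingEnd ℂ X.2 * Y.2) := by
      simp only [JFH, map_mul, map_add, map_sub, map_neg, map_div₀,
        Complex.conj_conj, Complex.conj_I, Complex.conj_ofReal]
      generalize hw : starRingEnd ℂ (Complex.exp ((φ : ℂ) * Complex.I)) = w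
      generalize hE : Complex.exp ((φ : ℂ) * Complex.I) = E
      rw [hw, hE] at key
      have hE0 : E ≠ 0 := right_ne_zero_of_mul_eq_one key
      rw [eq_inv_of_mul_eq_one_left key]
      push_cast
      field_simp [hFc, hE0]
      ring_nf
      simp only [Complex.I_sq]
      field_simp [hFc, hE0]
      ring
    have h2 := congrArg Complex.re main
    rw [Complex.add_re, Complex.add_re, Complex.re_ofReal_mul, Complex.re_ofReal_mul,
      Complex.re_ofReal_mul, Complex.re_ofReal_mul, re_conj_mul, re_conj_mul] at h2
    simpa only [gFH] using h2
end
end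

section
/- Let U ⊆ ℂ² be open, let f : U → ℝ \ {0} and h : U → ℂ be smooth, let g = 2f²(dz₁ + h dz₂)(dz̄₁ + h̄ dz̄₂) + (2/f²) dz₂ dz̄₂ and J⁺_{e^{iφ}} = 2Re{ i e^{iφ} [ f²(dz₁ + h dz₂) ⊗ (∂_{z̄₂} − h̄ ∂_{z̄₁}) − (1/f²) dz₂ ⊗ ∂_{z̄₁} ] } for φ ∈ ℝ. Then the fundamental 2-form ω(X,Y) = g(X, J⁺_{e^{iφ}} Y) is equal to the constant-coefficient 2-form i(e^{iφ} dz₂∧dz₁ − e^{−iφ} dz̄₂∧dz̄₁) — in particular it does not depend on f and h — and this 2-form is closed, so (U, g, J⁺_{e^{iφ}}) is almost-Kähler. -/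
noncomputable section

/-- The fundamental 2-form `ω(X,Y) = g(X, J⁺_{e^{iφ}} Y)` as a function of the point. -/
def omegaFH (f : ℂ × ℂ → ℝ) (h : ℂ × ℂ → ℂ) (φ : ℝ) (p : ℂ × ℂ) (X Y : ℂ × ℂ) : ℝ :=
  gFH (f p) (h p) X (JFH (f p) (h p) φ Y)

lemma key (f : ℝ) (hf : f ≠ 0) (h : ℂ) (φ : ℝ) (X Y : ℂ × ℂ) :
    ((gFH f h X (JFH f h φ Y) : ℝ) : ℂ) =
      Complex.I * (Complex.exp ((φ : ℂ) * Complex.I) * (X.2 * Y.1 - X.1 * Y.2) -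
        Complex.exp (-((φ : ℂ) * Complex.I)) *
          (starRingEnd ℂ X.2 * starRingEnd ℂ Y.1 -
            starRingEnd ℂ X.1 * starRingEnd ℂ Y.2)) := by
  have hre : ∀ z : ℂ, ((z.re : ℝ) : ℂ) = (z + starRingEnd ℂ z) / 2 := by
    intro z; rw [Complex.add_conj]; push_cast; ring
  have hfc : (f : ℂ) ≠ 0 := by exact_mod_cast hf
  have hconj : starRingEnd ℂ (Complex.exp ((φ : ℂ) * Complex.I)) =
      Complex.exp (-((φ : ℂ) * Complex.I)) := by
    rw [← Complex.exp_conj]; congr 1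
    simp [map_mul, Complex.conj_I, Complex.conj_ofReal]
  have hconj' : starRingEnd ℂ (Complex.exp (-((φ : ℂ) * Complex.I))) =
      Complex.exp ((φ : ℂ) * Complex.I) := by
    rw [← Complex.exp_conj]; congr 1
    simp [map_mul, Complex.conj_I, Complex.conj_ofReal]
  have hce : Complex.exp (-((φ : ℂ) * Complex.I)) * Complex.exp ((φ : ℂ) * Complex.I) = 1 := by
    rw [← Complex.exp_add]; simp
  simp only [gFH, JFH]
  push_cast
  rw [hre, hre]
  simp only [map_mul, map_add, map_sub, map_div₀, map_neg, map_inv₀, Complex.conj_conj,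
    hconj, hconj', Complex.conj_I, Complex.conj_ofReal, map_pow]
  set e := Complex.exp ((φ : ℂ) * Complex.I) with hedef
  set c := Complex.exp (-((φ : ℂ) * Complex.I)) with hcdef
  field_simp
  linear_combination (0 : ℂ) * hce

/-- The fundamental 2-form of `(g, J⁺_{e^{iφ}})` equals the
constant-coefficient 2-form `i(e^{iφ} dz₂∧dz₁ − e^{−iφ} dz̄₂∧dz̄₁)` — independently of
`f` and `h` — and it is closed (the cyclic sum of directional derivatives of its
coefficients vanishes); hence `(U, g, J⁺_{e^{iφ}})` is almost-Kähler. -/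
theorem omegaFH_constant_closed (U : Set (ℂ × ℂ)) (hU : IsOpen U)
    (f : ℂ × ℂ → ℝ) (h : ℂ × ℂ → ℂ)
    (hf : ContDiffOn ℝ (⊤ : ℕ∞) f U) (hh : ContDiffOn ℝ (⊤ : ℕ∞) h U)
    (hf0 : ∀ p ∈ U, f p ≠ 0) (φ : ℝ) :
    (∀ p ∈ U, ∀ X Y : ℂ × ℂ,
      ((omegaFH f h φ p X Y : ℝ) : ℂ) =
        Complex.I * (Complex.exp ((φ : ℂ) * Complex.I) * (X.2 * Y.1 - X.1 * Y.2) -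
          Complex.exp (-((φ : ℂ) * Complex.I)) *
            (starRingEnd ℂ X.2 * starRingEnd ℂ Y.1 -
              starRingEnd ℂ X.1 * starRingEnd ℂ Y.2))) ∧
    (∀ p ∈ U, ∀ X Y Z : ℂ × ℂ,
      fderiv ℝ (fun q => omegaFH f h φ q Y Z) p X +
        fderiv ℝ (fun q => omegaFH f h φ q Z X) p Y +
        fderiv ℝ (fun q => omegaFH f h φ q X Y) p Z = 0) := by
  have main : ∀ p ∈ U, ∀ X Y : ℂ × ℂ,
      ((omegaFH f h φ p X Y : ℝ) : ℂ) =
        Complex.I * (Complex.exp ((φ : ℂ) * Complex.I) * (X.2 * Y.1 - X.1 * Y.2) -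
          Complex.exp (-((φ : ℂ) * Complex.I)) *
            (starRingEnd ℂ X.2 * starRingEnd ℂ Y.1 -
              starRingEnd ℂ X.1 * starRingEnd ℂ Y.2)) := by
    intro p hp X Y
    exact key (f p) (hf0 p hp) (h p) φ X Y
  refine ⟨main, ?_⟩
  intro p hp X Y Z
  have hconst : ∀ A B : ℂ × ℂ, fderiv ℝ (fun q => omegaFH f h φ q A B) p = 0 := by
    intro A B
    have heq : (fun q => omegaFH f h φ q A B) =ᶠ[nhds p]
        (fun _ => omegaFH f h φ p A B) := by
      filter_upwards [hU.mem_nhds hp] with q hq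
      have h1 := main q hq A B
      have h2 := main p hp A B
      exact_mod_cast h1.trans h2.symm
    rw [heq.fderiv_eq]
    exact fderiv_const_apply _
  simp [hconst]
end
end
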